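/- arXiv:2207.02476 — 6 statements merged into one kernel-verified Lean document; each statement's English description precedes it below -/
import Mathlib

section
/- Any list of distinct integers can be partitioned into L increasing subsequences, where L is the length of its longest strictly decreasing subsequence. Equivalently, there exists a coloring of positions with L colors such that each color class forms an increasing subsequence. -/
/-!
Colour position `i` by the length of the longest decreasing subsequence ending at `i`, minus one.
This colour is below `L`, and if `i < j` with `a i > a j`, any decreasing subsequence ending at `i`
extends by `a j`, so `j` gets a strictly larger colour. Hence positions of equal colour carry
increasing values, distinctness ruling out equality.
-/

def LDS (a : List ℤ) : ℕ :=
  ((a.sublists.filter (fun l => decide (l.IsChain (· > ·)))).map List.length).foldr max 0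

theorem List.take_append_get_sublist_take {α : Type*} {a : List α} {i : Fin a.length} {j : ℕ}
    (hij : i < j) : (a.take i ++ [a.get i]).Sublist (a.take j) :=
  a.take_concat_get' i i.2 ▸ List.take_sublist_take_left hij

namespace LDS

theorem length_le {a l : List ℤ} (hl : l.Sublist a) (hdec : l.Pairwise (· > ·)) :
    l.length ≤ LDS a :=
  List.le_max_of_le (List.mem_map_of_mem (List.mem_filter.2
    ⟨List.mem_sublists.2 hl, by simpa [List.isChain_iff_pairwise] using hdec⟩)) le_rfl

theorem exists_sublist_pairwise_length_eq (a : List ℤ) :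
    ∃ l : List ℤ, l.Sublist a ∧ l.Pairwise (· > ·) ∧ l.length = LDS a := by
  have hne :
      (a.sublists.filter (fun l => decide (l.IsChain (· > ·)))).map List.length ≠ [] := by
    simpa [List.filter_eq_nil_iff] using ⟨[], List.nil_sublist a, List.isChain_nil⟩
  obtain ⟨l, hl, hlen⟩ := List.mem_map.1 (List.maximum_mem (List.foldr_max_of_ne_nil hne).symm)
  simp only [List.mem_filter, List.mem_sublists, decide_eq_true_eq,
    List.isChain_iff_pairwise] at hl
  exact ⟨l, hl.1, hl.2, hlen⟩

theorem filter_gt_lt_of_append_sublist {b c : List ℤ} {x : ℤ}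
    (h : (b.filter (· > x) ++ [x]).Sublist c) : LDS (b.filter (· > x)) < LDS c := by
  obtain ⟨l, hl, hdec, hlen⟩ := exists_sublist_pairwise_length_eq (b.filter (· > x))
  have hgt : ∀ y ∈ l, y > x := fun y hy => by simpa using (List.mem_filter.1 (hl.subset hy)).2
  have hdec' : (l ++ [x]).Pairwise (· > ·) :=
    List.pairwise_append.2 ⟨hdec, List.pairwise_singleton _ _,
      fun y hy z hz => List.mem_singleton.1 hz ▸ hgt y hy⟩
  have hlen' := length_le ((hl.append (List.Sublist.refl [x])).trans h) hdec'
  rwa [List.length_append, List.length_singleton, hlen] at hlen'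

end LDS

/-- The longest decreasing subsequence ending at position `i` has length `decDepth a i + 1`. -/
def decDepth (a : List ℤ) (i : Fin a.length) : ℕ :=
  LDS ((a.take i).filter (· > a.get i))

theorem decDepth_lt_LDS (a : List ℤ) (i : Fin a.length) : decDepth a i < LDS a :=
  LDS.filter_gt_lt_of_append_sublist <|
    (List.filter_sublist.append (List.Sublist.refl _)).trans <|
      (List.take_append_get_sublist_take i.2).trans (List.take_sublist _ _)

theorem decDepth_lt_decDepth {a : List ℤ} {i j : Fin a.length} (hij : i < j)
    (hgt : a.get j < a.get i) :
    decDepth a i < decDepth a j := by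
  have hfilter : ((a.take i).filter (· > a.get i)).Sublist ((a.take i).filter (· > a.get j)) :=
    (a.take i).monotone_filter_right fun y hy => by simp only [decide_eq_true_eq] at hy ⊢; omega
  refine LDS.filter_gt_lt_of_append_sublist ((hfilter.append (List.Sublist.refl _)).trans ?_)
  have hsub := (List.take_append_get_sublist_take hij).filter (· > a.get j)
  rwa [List.filter_append, List.filter_singleton, decide_eq_true hgt, cond_true] at hsub

/-- any list of distinct integers can be partitioned into `LDS a`
increasing subsequences: there is a coloring of positions with `LDS a` colors
such that positions of equal color carry strictly increasing values. -/
theorem partition_into_increasing (a : List ℤ) (ha : a.Nodup) :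
    ∃ f : Fin a.length → Fin (LDS a),
      ∀ i j : Fin a.length, i < j → f i = f j → a.get i < a.get j := by
  refine ⟨fun i => ⟨decDepth a i, decDepth_lt_LDS a i⟩, fun i j hij hcol => ?_⟩
  by_contra! hle
  have hgt : a.get j < a.get i := hle.lt_of_ne (ha.get_inj_iff.not.2 hij.ne')
  exact (decDepth_lt_decDepth hij hgt).ne (congrArg Fin.val hcol)
end

section
/- In any interleaving (merge preserving the relative order of each sequence) of the two sequences Q1 = [7, 1, 9, 3] and Q2 = [4, 2, 5, 8, 6], the resulting sequence contains a strictly decreasing subsequence of length at least 3. -/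
/-- `Interleave A B C` means `C` is a merge of `A` and `B` preserving the
relative order of each. -/
inductive Interleave : List ℤ → List ℤ → List ℤ → Prop
  | nil : Interleave [] [] []
  | left {A B C : List ℤ} (x : ℤ) : Interleave A B C → Interleave (x :: A) B (x :: C)
  | right {A B C : List ℤ} (x : ℤ) : Interleave A B C → Interleave A (x :: B) (x :: C)

def merges : List ℤ → List ℤ → List (List ℤ)
  | [], B => [B]
  | a :: A, [] => [a :: A]
  | a :: A, b :: B =>
      (merges A (b :: B)).map (a :: ·) ++ (merges (a :: A) B).map (b :: ·)

lemma mem_merges_left {A B C : List ℤ} (x : ℤ) (h : C ∈ merges A B) :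
    x :: C ∈ merges (x :: A) B := by
  cases B with
  | nil =>
    cases A with
    | nil => simp [merges] at h; simp [merges, h]
    | cons a A => simp [merges] at h ⊢; exact h
  | cons b B =>
    simp only [merges, List.mem_append, List.mem_map]
    exact Or.inl ⟨C, h, rfl⟩

lemma mem_merges_right {A B C : List ℤ} (x : ℤ) (h : C ∈ merges A B) :
    x :: C ∈ merges A (x :: B) := by
  cases A with
  | nil => simp [merges] at h ⊢; exact h
  | cons a A =>
    simp only [merges, List.mem_append, List.mem_map]
    exact Or.inr ⟨C, h, rfl⟩

lemma interleave_mem {A B C : List ℤ} (h : Interleave A B C) : C ∈ merges A B := by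
  induction h with
  | nil => simp [merges]
  | left x _ ih => exact mem_merges_left x ih
  | right x _ ih => exact mem_merges_right x ih

def check (C : List ℤ) : Bool :=
  C.sublists.any fun l =>
    match l with
    | a :: b :: c :: _ => (@decide (b < a) (Int.decLt b a)) && (@decide (c < b) (Int.decLt c b))
    | _ => false

lemma check_spec {C : List ℤ} (h : check C = true) :
    ∃ l : List ℤ, l.Sublist C ∧ l.Chain' (· > ·) ∧ 3 ≤ l.length := by
  rw [check, List.any_eq_true] at h
  obtain ⟨l, hl, hp⟩ := h
  match l, hp with
  | a :: b :: c :: rest, hp =>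
    simp only [Bool.and_eq_true, decide_eq_true_eq] at hp
    refine ⟨[a, b, c], ?_, ?_, by norm_num⟩
    · refine List.Sublist.trans ?_ (List.mem_sublists.mp hl)
      exact List.cons_sublist_cons.mpr (List.cons_sublist_cons.mpr
        (List.cons_sublist_cons.mpr (List.nil_sublist rest)))
    · exact List.isChain_cons_cons.mpr ⟨hp.1, List.isChain_cons_cons.mpr ⟨hp.2, List.isChain_singleton c⟩⟩

set_option maxRecDepth 8000

/-- every interleaving of `[7,1,9,3]` and `[4,2,5,8,6]` contains a
strictly decreasing subsequence of length at least 3. -/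
theorem no_lds_two_merge (C : List ℤ)
    (hC : Interleave [7, 1, 9, 3] [4, 2, 5, 8, 6] C) :
    ∃ l : List ℤ, l.Sublist C ∧ l.Chain' (· > ·) ∧ 3 ≤ l.length := by
  have hmem := interleave_mem hC
  have key : ∀ C ∈ merges [7, 1, 9, 3] [4, 2, 5, 8, 6], check C = true := by
    simp only [merges]
    decide
  exact check_spec (key C hmem)
end

section
/- For any two lists A and B of distinct integers with LDS(A) ≤ 2 and LDS(B) ≤ 2, there exists an interleaving C of A and B with LDS(C) ≤ 3. -/
/-!
Take for `C` the greedy merge of `A` and `B`, which always outputs the smaller of the two heads.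
Let `x :: u` be a decreasing subsequence of `C` where `x` comes from `A` and `u` from `B`.
When `x` was output, the head `b` of the remaining part of `B` exceeded `x`, and all of `u` was
still to come; since `u < x < b`, `b :: u` is a decreasing subsequence of `B`. So if `LDS A ≤ p`
and `LDS B ≤ q` with `p, q ≥ 1`, such a subsequence of `C` has at most `p + q - 1` elements; for
one starting in `B` the same holds because, the elements being distinct, merging is symmetric.
-/

namespace List

variable {α : Type*} [LinearOrder α] {l l₁ l₂ : List α}

theorem merge_comm_of_disjoint (h : l₁.Disjoint l₂) : merge l₁ l₂ = merge l₂ l₁ := by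
  induction l₁, l₂ using merge.induct (le := fun a b : α => decide (a ≤ b)) with
  | case1 => simp
  | case2 => simp
  | case3 a l₁ b l₂ hab ih =>
    have hba : ¬ b ≤ a := fun hba =>
      h mem_cons_self (le_antisymm (by simpa using hab) hba ▸ mem_cons_self)
    rw [cons_merge_cons_pos _ _ _ hab, cons_merge_cons_neg _ _ _ (by simpa using hba),
      ih (disjoint_cons_left.mp h).2]
  | case4 a l₁ b l₂ hab ih =>
    have hba : b ≤ a := le_of_lt (by simpa using hab)
    rw [cons_merge_cons_neg _ _ _ hab, cons_merge_cons_pos _ _ _ (by simpa using hba),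
      ih (disjoint_cons_right.mp h).2]

theorem Sublist.of_sublist_merge_right (w : ∀ a ∈ l, a ∉ l₁) (h : l <+ merge l₁ l₂) :
    l <+ l₂ := by
  induction l₁, l₂ using merge.induct (le := fun a b : α => decide (a ≤ b)) generalizing l with
  | case1 => simpa using h
  | case2 l₁ =>
    simp only [merge_right] at h
    exact sublist_nil.mpr (eq_nil_iff_forall_not_mem.mpr fun a ha => w a ha (h.subset ha))
  | case3 a l₁ b l₂ hab ih =>
    rw [cons_merge_cons_pos _ _ _ hab] at h
    obtain h | ⟨r, rfl, -⟩ := sublist_cons_iff.mp h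
    · exact ih (fun x hx => mt (mem_cons_of_mem a) (w x hx)) h
    · exact absurd mem_cons_self (w a mem_cons_self)
  | case4 a l₁ b l₂ hab ih =>
    rw [cons_merge_cons_neg _ _ _ hab] at h
    obtain h | ⟨r, rfl, hr⟩ := sublist_cons_iff.mp h
    · exact (ih w h).cons b
    · exact (ih (fun x hx => w x (mem_cons_of_mem b hx)) hr).cons_cons b

theorem Sublist.of_sublist_merge_left (hd : l₁.Disjoint l₂) (w : ∀ a ∈ l, a ∉ l₂)
    (h : l <+ merge l₁ l₂) : l <+ l₁ :=
  (merge_comm_of_disjoint hd ▸ h).of_sublist_merge_right w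

theorem exists_lt_cons_sublist_of_cons_sublist_merge {x : α} {u : List α} (hx₁ : x ∈ l₁)
    (hx₂ : x ∉ l₂) (hu₁ : ∀ z ∈ u, z ∉ l₁) (hux : ∀ z ∈ u, z < x) (hne : u ≠ [])
    (h : x :: u <+ merge l₁ l₂) : ∃ y, x < y ∧ y :: u <+ l₂ := by
  induction l₁, l₂ using merge.induct (le := fun a b : α => decide (a ≤ b)) with
  | case1 => exact absurd hx₁ not_mem_nil
  | case2 l₁ =>
    rw [merge_right] at h
    exact absurd (eq_nil_iff_forall_not_mem.mpr fun z hz =>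
      hu₁ z hz ((sublist_of_cons_sublist h).subset hz)) hne
  | case3 a l₁ b l₂ hab ih =>
    rw [cons_merge_cons_pos _ _ _ hab] at h
    by_cases hxa : x = a
    · subst hxa
      have hub : u <+ b :: l₂ := (cons_sublist_cons.mp h).of_sublist_merge_right
        fun z hz => mt (mem_cons_of_mem x) (hu₁ z hz)
      have hxb : x < b := lt_of_le_of_ne (by simpa using hab) fun e => hx₂ (e ▸ mem_cons_self)
      obtain hub | ⟨r, rfl, -⟩ := sublist_cons_iff.mp hub
      · exact ⟨b, hxb, hub.cons_cons b⟩
      · exact absurd (hux b mem_cons_self) (not_lt.mpr hxb.le)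
    · obtain h | ⟨r, hr, -⟩ := sublist_cons_iff.mp h
      · exact ih (mem_of_ne_of_mem hxa hx₁) hx₂ (fun z hz => mt (mem_cons_of_mem a) (hu₁ z hz)) h
      · exact absurd (cons_eq_cons.mp hr).1 hxa
  | case4 a l₁ b l₂ hab ih =>
    rw [cons_merge_cons_neg _ _ _ hab] at h
    obtain h | ⟨r, hr, -⟩ := sublist_cons_iff.mp h
    · obtain ⟨y, hxy, hy⟩ := ih hx₁ (mt (mem_cons_of_mem b) hx₂) hu₁ h
      exact ⟨y, hxy, hy.cons b⟩
    · exact absurd ((cons_eq_cons.mp hr).1 ▸ mem_cons_self) hx₂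

end List

open List

theorem interleave_nil_left (B : List ℤ) : Interleave [] B B := by
  induction B with
  | nil => exact .nil
  | cons b B ih => exact .right b ih

theorem interleave_nil_right (A : List ℤ) : Interleave A [] A := by
  induction A with
  | nil => exact .nil
  | cons a A ih => exact .left a ih

theorem interleave_merge (A B : List ℤ) : Interleave A B (A.merge B) := by
  induction A, B using merge.induct (le := fun a b : ℤ => decide (a ≤ b)) with
  | case1 B => simpa using interleave_nil_left B
  | case2 A => simpa using interleave_nil_right A
  | case3 a A b B hab ih => rw [cons_merge_cons_pos _ _ _ hab]; exact ih.left a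
  | case4 a A b B hab ih => rw [cons_merge_cons_neg _ _ _ hab]; exact ih.right b

theorem lds_le_iff {l : List ℤ} {n : ℕ} :
    LDS l ≤ n ↔ ∀ s, s <+ l → s.Pairwise (· > ·) → s.length ≤ n := by
  simp only [LDS, isChain_iff_pairwise]
  constructor
  · intro h s hs hdec
    exact (le_max_of_le (mem_map_of_mem (mem_filter.mpr
      ⟨mem_sublists.mpr hs, decide_eq_true hdec⟩)) le_rfl).trans h
  · intro h
    refine max_le_of_forall_le _ _ fun k hk => ?_
    obtain ⟨s, hs, rfl⟩ := mem_map.mp hk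
    obtain ⟨hs, hdec⟩ := mem_filter.mp hs
    exact h s (mem_sublists.mp hs) (of_decide_eq_true hdec)

section

variable {A B : List ℤ} {m n : ℕ}

theorem length_le_of_cons_sublist_merge (hAB : A.Disjoint B) (hA : LDS A ≤ m + 1)
    (hB : LDS B ≤ n + 1) {x : ℤ} {t : List ℤ} (hx : x ∉ B) (hs : x :: t <+ A.merge B)
    (hdec : (x :: t).Pairwise (· > ·)) : (x :: t).length ≤ m + n + 1 := by
  rw [lds_le_iff] at hA hB
  obtain ⟨hxt, htdec⟩ := pairwise_cons.mp hdec
  set inB : ℤ → Bool := fun z => decide (z ∈ B)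
  set u := t.filter inB
  have hsplit : (x :: t).length = u.length + ((x :: t).filter (!inB ·)).length := by
    rw [length_eq_length_filter_add inB, filter_cons_of_neg (by simpa [inB] using hx)]
  have hlenA : ((x :: t).filter (!inB ·)).length ≤ m + 1 :=
    hA _ ((filter_sublist.trans hs).of_sublist_merge_left hAB (by simp [inB]))
      (hdec.sublist filter_sublist)
  suffices u.length ≤ n by omega
  rcases eq_or_ne u [] with hu | hu
  · simp [hu]
  have hux : ∀ z ∈ u, z < x := fun z hz => hxt z (mem_of_mem_filter hz)
  obtain ⟨y, hxy, hy⟩ := exists_lt_cons_sublist_of_cons_sublist_merge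
    ((mem_merge.mp (hs.subset mem_cons_self)).resolve_right hx) hx
    (fun z hz => hAB.symm (by simpa [u, inB] using of_mem_filter hz)) hux hu
    ((cons_sublist_cons.mpr filter_sublist).trans hs)
  simpa using hB _ hy
    (pairwise_cons.mpr ⟨fun z hz => (hux z hz).trans hxy, htdec.sublist filter_sublist⟩)

theorem lds_merge_le (hAB : A.Disjoint B) (hA : LDS A ≤ m + 1) (hB : LDS B ≤ n + 1) :
    LDS (A.merge B) ≤ m + n + 1 := by
  refine lds_le_iff.mpr fun s hs hdec => ?_
  rcases s with _ | ⟨x, t⟩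
  · simp
  by_cases hx : x ∈ B
  · rw [merge_comm_of_disjoint hAB] at hs
    have := length_le_of_cons_sublist_merge hAB.symm hB hA (fun h => hAB h hx) hs hdec
    omega
  · exact length_le_of_cons_sublist_merge hAB hA hB hx hs hdec

end

/-- two lists of LDS at most 2 can be merged into a list of LDS at most 3. -/
theorem merge_lds_two_into_three (A B : List ℤ) (hnd : (A ++ B).Nodup)
    (hA : LDS A ≤ 2) (hB : LDS B ≤ 2) :
    ∃ C : List ℤ, Interleave A B C ∧ LDS C ≤ 3 :=
  ⟨A.merge B, interleave_merge A B, lds_merge_le (disjoint_of_nodup_append hnd) hA hB⟩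
end

section
/- More generally, for any list A with a strictly decreasing subsequence of length L, any processing of A through k parallel FIFO queues yields an output whose longest strictly decreasing subsequence has length at least ⌈L/k⌉. -/
inductive KInterleave : {k : ℕ} → (Fin k → List ℤ) → List ℤ → Prop
  | nil {k : ℕ} : KInterleave (fun _ : Fin k => []) []
  | cons {k : ℕ} (i : Fin k) (x : ℤ) {qs : Fin k → List ℤ} {C : List ℤ} :
      KInterleave qs C → KInterleave (Function.update qs i (x :: qs i)) (x :: C)

lemma le_LDS {C l : List ℤ} (hs : l.Sublist C) (hc : l.IsChain (· > ·)) :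
    l.length ≤ LDS C :=
  List.le_max_of_le' 0
    (List.mem_map_of_mem (List.mem_filter.mpr ⟨List.mem_sublists.mpr hs, decide_eq_true hc⟩))
    le_rfl

lemma Nat.add_pred_div_le_of_le_mul {n k m : ℕ} (h : n ≤ k * m) : (n + k - 1) / k ≤ m := by
  rcases k.eq_zero_or_pos with rfl | hk
  · simp
  · rw [← Nat.ceilDiv_eq_add_pred_div, ceilDiv_le_iff_le_mul hk]
    exact h

namespace KInterleave

variable {k : ℕ} {qs : Fin k → List ℤ} {C : List ℤ}

lemma sublist (h : KInterleave qs C) (i : Fin k) : (qs i).Sublist C := by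
  induction h with
  | nil => simp
  | cons j x _ ih =>
    rcases eq_or_ne i j with rfl | hne
    · simpa using ih.cons_cons x
    · rw [Function.update_of_ne hne]
      exact ih.trans (List.sublist_cons_self x _)

lemma sum_length (h : KInterleave qs C) : ∑ i, (qs i).length = C.length := by
  classical
  induction h with
  | nil => simp
  | @cons j x qs C _ ih =>
    have hj := Finset.mem_univ j
    calc ∑ i, (Function.update qs j (x :: qs j) i).length
        = (qs j).length + 1 + ∑ i ∈ Finset.univ.erase j, (qs i).length := by
          simp only [Function.apply_update (fun _ (l : List ℤ) => l.length),
            Finset.sum_update_of_mem hj, Finset.sdiff_singleton_eq_erase, List.length_cons]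
      _ = (x :: C).length := by
          rw [List.length_cons, ← ih, ← Finset.add_sum_erase _ _ hj]
          ring

lemma exists_of_sublist (h : KInterleave qs C) {l : List ℤ} (hl : l.Sublist C) :
    ∃ ls : Fin k → List ℤ, KInterleave ls l ∧ ∀ i, (ls i).Sublist (qs i) := by
  induction h generalizing l with
  | nil =>
    obtain rfl := List.sublist_nil.mp hl
    exact ⟨fun _ => [], nil, fun _ => List.Sublist.refl _⟩
  | cons j x _ ih =>
    rcases List.sublist_cons_iff.mp hl with hl | ⟨r, rfl, hr⟩
    · obtain ⟨ls, hls, hsub⟩ := ih hl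
      refine ⟨ls, hls, fun i => ?_⟩
      rcases eq_or_ne i j with rfl | hne
      · simpa using (hsub i).trans (List.sublist_cons_self x _)
      · simpa [Function.update_of_ne hne] using hsub i
    · obtain ⟨ls, hls, hsub⟩ := ih hr
      refine ⟨Function.update ls j (x :: ls j), cons j x hls, fun i => ?_⟩
      rcases eq_or_ne i j with rfl | hne
      · simpa using (hsub i).cons_cons x
      · simpa [Function.update_of_ne hne] using hsub i

end KInterleave

theorem general_lower_bound_general (A : List ℤ) (L : ℕ)
    (hL : ∃ l : List ℤ, l.Sublist A ∧ l.Chain' (· > ·) ∧ l.length = L)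
    (k : ℕ) (qs : Fin k → List ℤ) (C : List ℤ)
    (henq : KInterleave qs A) (hdeq : KInterleave qs C) :
    (L + k - 1) / k ≤ LDS C := by
  obtain ⟨l, hlA, hchain, rfl⟩ := hL
  obtain ⟨ls, hls, hsub⟩ := henq.exists_of_sublist hlA
  have hpiece (i : Fin k) : (ls i).length ≤ LDS C :=
    le_LDS ((hsub i).trans (hdeq.sublist i)) (hchain.sublist (hls.sublist i))
  apply Nat.add_pred_div_le_of_le_mul
  calc l.length = ∑ i, (ls i).length := hls.sum_length.symm
    _ ≤ Finset.univ.card • LDS C := Finset.sum_le_card_nsmul _ _ _ fun i _ => hpiece i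
    _ = k * LDS C := by simp

/-- if `A` contains a strictly decreasing subsequence of length `L`,
then any processing of `A` through `k` parallel queues outputs a list whose LDS
is at least `⌈L/k⌉`. -/
theorem general_lower_bound (A : List ℤ) (L : ℕ)
    (hL : ∃ l : List ℤ, l.Sublist A ∧ l.Chain' (· > ·) ∧ l.length = L)
    (k : ℕ) (hk : 0 < k) (qs : Fin k → List ℤ) (C : List ℤ)
    (henq : KInterleave qs A) (hdeq : KInterleave qs C) :
    (L + k - 1) / k ≤ LDS C :=
  general_lower_bound_general A L hL k qs C henq hdeq
end

section
/- Splitting lemma for queue networks: let C be a list that is an interleaving of disjoint subsequences A and B. If A can be processed through s parallel queues to achieve output LDS at most ℓ, and B can be processed through s' parallel queues to achieve output LDS at most t, then C can be processed through s + s' − 1 parallel queues to achieve output LDS at most ℓ + t. -/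
/-- `Lam m X` : the minimum LDS of an output obtainable by processing `X`
through `m` parallel queues. -/
noncomputable def Lam (m : ℕ) (X : List ℤ) : ℕ :=
  sInf {r | ∃ (qs : Fin m → List ℤ) (C : List ℤ),
    KInterleave qs X ∧ KInterleave qs C ∧ LDS C = r}

/-! Take optimal strategies for `A` with `s` queues and for `B` with `s'` queues, keep all their
queues except the last ones, and merge those two last queues into a single queue that receives its
elements in the order in which they occur in `C`. This gives a strategy for `C` with `s + s' - 1`
queues. The outputs `α` of `A` and `β` of `B` can be merged greedily into an output `O` of the new
strategy that is an interleaving of `α` and `β`. A decreasing subsequence of `O` splits into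
decreasing subsequences of `α` and `β`, so `LDS O ≤ LDS α + LDS β ≤ ℓ + t`. -/

theorem LDS_le_iff {X : List ℤ} {n : ℕ} :
    LDS X ≤ n ↔ ∀ D : List ℤ, D.Sublist X → D.IsChain (· > ·) → D.length ≤ n := by
  simp only [LDS]
  constructor
  · intro h D hD hchain
    refine le_trans (List.le_max_of_le' 0 ?_ le_rfl) h
    exact List.mem_map_of_mem (List.mem_filter.2 ⟨List.mem_sublists.2 hD, decide_eq_true hchain⟩)
  · intro h
    refine List.max_le_of_forall_le _ n fun a ha => ?_
    obtain ⟨D, hD, rfl⟩ := List.mem_map.1 ha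
    obtain ⟨hsub, hchain⟩ := List.mem_filter.1 hD
    exact h D (List.mem_sublists.1 hsub) (of_decide_eq_true hchain)

namespace Interleave

variable {A B C : List ℤ}

theorem length_eq (h : Interleave A B C) : C.length = A.length + B.length := by
  induction h <;> simp only [List.length_cons, List.length_nil] <;> omega

theorem sublist_left (h : Interleave A B C) : A.Sublist C := by
  induction h with
  | nil => exact .slnil
  | left x _ ih => exact ih.cons_cons x
  | right x _ ih => exact ih.cons x

theorem sublist_right (h : Interleave A B C) : B.Sublist C := by
  induction h with
  | nil => exact .slnil
  | left x _ ih => exact ih.cons x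
  | right x _ ih => exact ih.cons_cons x

theorem nil_left (B : List ℤ) : Interleave [] B B := by
  induction B with
  | nil => exact .nil
  | cons x B ih => exact .right x ih

theorem nil_right (A : List ℤ) : Interleave A [] A := by
  induction A with
  | nil => exact .nil
  | cons x A ih => exact .left x ih

theorem eq_of_nil_left (h : Interleave [] B C) : C = B :=
  (h.sublist_right.eq_of_length (by simp [h.length_eq])).symm

theorem eq_of_nil_right (h : Interleave A [] C) : C = A :=
  (h.sublist_left.eq_of_length (by simp [h.length_eq])).symm

theorem exists_of_sublist (h : Interleave A B C) {D : List ℤ} (hD : D.Sublist C) :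
    ∃ D₁ D₂, Interleave D₁ D₂ D ∧ D₁.Sublist A ∧ D₂.Sublist B := by
  induction h generalizing D with
  | nil => exact ⟨[], [], List.sublist_nil.1 hD ▸ .nil, .slnil, .slnil⟩
  | left x _ ih =>
    cases hD with
    | cons _ hD =>
      obtain ⟨D₁, D₂, hI, h₁, h₂⟩ := ih hD
      exact ⟨D₁, D₂, hI, h₁.cons x, h₂⟩
    | cons_cons _ hD =>
      obtain ⟨D₁, D₂, hI, h₁, h₂⟩ := ih hD
      exact ⟨x :: D₁, D₂, .left x hI, h₁.cons_cons x, h₂⟩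
  | right x _ ih =>
    cases hD with
    | cons _ hD =>
      obtain ⟨D₁, D₂, hI, h₁, h₂⟩ := ih hD
      exact ⟨D₁, D₂, hI, h₁, h₂.cons x⟩
    | cons_cons _ hD =>
      obtain ⟨D₁, D₂, hI, h₁, h₂⟩ := ih hD
      exact ⟨D₁, x :: D₂, .right x hI, h₁, h₂.cons_cons x⟩

theorem LDS_le_add (h : Interleave A B C) : LDS C ≤ LDS A + LDS B := by
  refine LDS_le_iff.2 fun D hD hchain => ?_
  obtain ⟨D₁, D₂, hI, h₁, h₂⟩ := h.exists_of_sublist hD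
  rw [hI.length_eq]
  exact Nat.add_le_add (LDS_le_iff.1 le_rfl D₁ h₁ (hchain.sublist hI.sublist_left))
    (LDS_le_iff.1 le_rfl D₂ h₂ (hchain.sublist hI.sublist_right))

theorem exists_medial (h : Interleave A B C) {A₁ A₂ B₁ B₂ : List ℤ}
    (hA : Interleave A₁ A₂ A) (hB : Interleave B₁ B₂ B) :
    ∃ W M, Interleave A₁ B₁ W ∧ Interleave A₂ B₂ M ∧ Interleave W M C := by
  induction h generalizing A₁ A₂ B₁ B₂ with
  | nil =>
    cases hA; cases hB
    exact ⟨[], [], .nil, .nil, .nil⟩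
  | left x _ ih =>
    cases hA with
    | left x hA =>
      obtain ⟨W, M, hW, hM, hC⟩ := ih hA hB
      exact ⟨x :: W, M, .left x hW, hM, .left x hC⟩
    | right x hA =>
      obtain ⟨W, M, hW, hM, hC⟩ := ih hA hB
      exact ⟨W, x :: M, hW, .left x hM, .right x hC⟩
  | right x _ ih =>
    cases hB with
    | left x hB =>
      obtain ⟨W, M, hW, hM, hC⟩ := ih hA hB
      exact ⟨x :: W, M, .right x hW, hM, .left x hC⟩
    | right x hB =>
      obtain ⟨W, M, hW, hM, hC⟩ := ih hA hB
      exact ⟨W, x :: M, hW, .right x hM, .right x hC⟩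

theorem exists_medial_of_right {A₁ A₂ A B₁ B₂ B M : List ℤ} (hA : Interleave A₁ A₂ A)
    (hB : Interleave B₁ B₂ B) (hM : Interleave A₂ B₂ M) :
    ∃ C W, Interleave A B C ∧ Interleave A₁ B₁ W ∧ Interleave W M C := by
  induction hA generalizing B₁ B₂ B M with
  | nil =>
    cases hM.eq_of_nil_left
    exact ⟨B, B₁, nil_left B, nil_left B₁, hB⟩
  | left x _ ih =>
    obtain ⟨C, W, hC, hW, hWM⟩ := ih hB hM
    exact ⟨x :: C, x :: W, .left x hC, .left x hW, .left x hWM⟩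
  | @right A₁ A₂ A x hA ih =>
    induction hB generalizing M with
    | nil =>
      cases hM.eq_of_nil_right
      exact ⟨x :: A, A₁, nil_right _, nil_right A₁, .right x hA⟩
    | left y _ ihB =>
      obtain ⟨C, W, hC, hW, hWM⟩ := ihB hM
      exact ⟨y :: C, y :: W, .right y hC, .right y hW, .left y hWM⟩
    | right y hB ihB =>
      cases hM with
      | left x hM =>
        obtain ⟨C, W, hC, hW, hWM⟩ := ih (.right y hB) hM
        exact ⟨x :: C, W, .left x hC, hW, .right x hWM⟩
      | right y hM =>
        obtain ⟨C, W, hC, hW, hWM⟩ := ihB hM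
        exact ⟨y :: C, W, .right y hC, hW, .right y hWM⟩

end Interleave

theorem Fin.append_update_left {α : Type*} {m n : ℕ} (p : Fin m → α) (q : Fin n → α)
    (i : Fin m) (x : α) :
    Fin.append (Function.update p i x) q = Function.update (Fin.append p q) (Fin.castAdd n i) x := by
  funext k
  refine Fin.addCases (fun j => ?_) (fun j => ?_) k <;> simp [Function.update_apply, Fin.ext_iff]
  omega

theorem Fin.append_update_right {α : Type*} {m n : ℕ} (p : Fin m → α) (q : Fin n → α)
    (j : Fin n) (x : α) :
    Fin.append p (Function.update q j x) = Function.update (Fin.append p q) (Fin.natAdd m j) x := by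
  funext k
  refine Fin.addCases (fun i => ?_) (fun i => ?_) k <;> simp [Function.update_apply, Fin.ext_iff]
  omega

namespace KInterleave

theorem single {k : ℕ} (i : Fin k) (X : List ℤ) :
    KInterleave (Function.update (fun _ => []) i X) X := by
  induction X with
  | nil => simpa only [Function.update_eq_self] using (nil : KInterleave (fun _ : Fin k => []) [])
  | cons x X ih =>
    simpa only [Function.update_self, Function.update_idem] using cons i x ih

theorem exists_init_last {n : ℕ} {qs : Fin (n + 1) → List ℤ} {X : List ℤ}
    (h : KInterleave qs X) :
    ∃ Y, KInterleave (Fin.init qs) Y ∧ Interleave Y (qs (Fin.last n)) X := by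
  induction h with
  | nil => exact ⟨[], nil, .nil⟩
  | cons i x _ ih =>
    obtain ⟨Y, hY, hI⟩ := ih
    induction i using Fin.lastCases with
    | last =>
      refine ⟨Y, by rwa [Fin.init_update_last], ?_⟩
      simpa only [Function.update_self] using hI.right x
    | cast j =>
      refine ⟨x :: Y, by rw [Fin.init_update_castSucc]; exact hY.cons j x, ?_⟩
      rw [Function.update_of_ne (Fin.castSucc_lt_last j).ne']
      exact hI.left x

theorem snoc {n : ℕ} {qs : Fin n → List ℤ} {Y Z X : List ℤ} (hY : KInterleave qs Y)
    (hX : Interleave Y Z X) : KInterleave (Fin.snoc qs Z) X := by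
  induction hX generalizing qs with
  | nil =>
    cases hY
    convert (nil : KInterleave (fun _ : Fin (n + 1) => []) []) using 1
    funext j
    cases j using Fin.lastCases <;> simp
  | left y _ ih =>
    cases hY with
    | cons i y hY =>
      rw [Fin.snoc_update]
      simpa only [Fin.snoc_castSucc] using (ih hY).cons i.castSucc y
  | right z _ ih =>
    simpa only [Fin.snoc_last, Fin.update_snoc_last] using (ih hY).cons (Fin.last n) z

theorem append {m n : ℕ} {qs₁ : Fin m → List ℤ} {qs₂ : Fin n → List ℤ} {Y Z X : List ℤ}
    (hY : KInterleave qs₁ Y) (hZ : KInterleave qs₂ Z) (hX : Interleave Y Z X) :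
    KInterleave (Fin.append qs₁ qs₂) X := by
  induction hX generalizing qs₁ qs₂ with
  | nil =>
    cases hY; cases hZ
    convert (nil : KInterleave (fun _ : Fin (m + n) => []) []) using 1
    funext j
    cases j using Fin.addCases <;> simp
  | left y _ ih =>
    cases hY with
    | cons i y hY =>
      rw [Fin.append_update_left]
      simpa only [Fin.append_left] using (ih hY hZ).cons (Fin.castAdd n i) y
  | right z _ ih =>
    cases hZ with
    | cons i z hZ =>
      rw [Fin.append_update_right]
      simpa only [Fin.append_right] using (ih hY hZ).cons (Fin.natAdd m i) z

end KInterleave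

theorem Lam_le_LDS {m : ℕ} {qs : Fin m → List ℤ} {X C : List ℤ} (hX : KInterleave qs X)
    (hC : KInterleave qs C) : Lam m X ≤ LDS C :=
  Nat.sInf_le ⟨qs, C, hX, hC, rfl⟩

theorem exists_of_Lam_le {m : ℕ} (hm : 0 < m) {X : List ℤ} {r : ℕ} (h : Lam m X ≤ r) :
    ∃ (qs : Fin m → List ℤ) (C : List ℤ), KInterleave qs X ∧ KInterleave qs C ∧ LDS C ≤ r := by
  obtain ⟨qs, C, hX, hC, hLDS⟩ := Nat.sInf_mem (s := {r | ∃ (qs : Fin m → List ℤ) (C : List ℤ),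
    KInterleave qs X ∧ KInterleave qs C ∧ LDS C = r})
    ⟨_, _, X, KInterleave.single ⟨0, hm⟩ X, KInterleave.single ⟨0, hm⟩ X, rfl⟩
  exact ⟨qs, C, hX, hC, hLDS.trans_le h⟩

/-- splitting lemma: if `C` is an interleaving of `A` and `B`,
`Λ_s(A) ≤ ℓ` and `Λ_{s'}(B) ≤ t`, then `Λ_{s+s'-1}(C) ≤ ℓ + t`. -/
theorem splitting_lemma (A B C : List ℤ) (hC : Interleave A B C)
    (s s' : ℕ) (hs : 0 < s) (hs' : 0 < s') (ℓ t : ℕ)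
    (hA : Lam s A ≤ ℓ) (hB : Lam s' B ≤ t) :
    Lam (s + s' - 1) C ≤ ℓ + t := by
  obtain ⟨qsA, α, hqA, hqα, hα⟩ := exists_of_Lam_le hs hA
  obtain ⟨qsB, β, hqB, hqβ, hβ⟩ := exists_of_Lam_le hs' hB
  obtain ⟨m, rfl⟩ := Nat.exists_eq_add_one_of_ne_zero hs.ne'
  obtain ⟨n, rfl⟩ := Nat.exists_eq_add_one_of_ne_zero hs'.ne'
  obtain ⟨A₁, hA₁, hAA₁⟩ := hqA.exists_init_last
  obtain ⟨α₁, hα₁, hαα₁⟩ := hqα.exists_init_last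
  obtain ⟨B₁, hB₁, hBB₁⟩ := hqB.exists_init_last
  obtain ⟨β₁, hβ₁, hββ₁⟩ := hqβ.exists_init_last
  obtain ⟨W, M, hW, hM, hCWM⟩ := hC.exists_medial hAA₁ hBB₁
  obtain ⟨O, W', hO, hW', hOW'M⟩ := Interleave.exists_medial_of_right hαα₁ hββ₁ hM
  rw [show m + 1 + (n + 1) - 1 = m + n + 1 by omega]
  calc Lam (m + n + 1) C ≤ LDS O :=
        Lam_le_LDS ((hA₁.append hB₁ hW).snoc hCWM) ((hα₁.append hβ₁ hW').snoc hOW'M)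
    _ ≤ LDS α + LDS β := hO.LDS_le_add
    _ ≤ ℓ + t := Nat.add_le_add hα hβ
end

section
/- Lower bound for down-steps with k queues: for any list of distinct integers, and any partition of it into k subsequences (queues), the total number of down-steps across all k subsequences is at least d, where d is the number of positions j in the input at which a strictly decreasing subsequence of length k+1 ends when scanning greedily (equivalently, d is the number of down-steps incurred by the greedy cyclic algorithm Alg_DS). In particular, no assignment of elements to k queues produces fewer total down-steps in the queues than Alg_DS. -/
def downSteps (a : List ℤ) : ℕ :=
  (a.zip a.tail).countP (fun p => decide (p.1 > p.2))

/-- The number of down-steps incurred by the greedy algorithm `Alg_DS` with `k+1`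
queues when enqueuing the given list, starting from last elements `ℓ` and base `b`:
append `e` to the queue at the minimal cyclic offset from `b` whose last element is
below `e`; if none exists, append to the base queue (a down-step) and advance the base. -/
def algDS (k : ℕ) : List ℤ → (Fin (k + 1) → ℤ) → Fin (k + 1) → ℕ
  | [], _, _ => 0
  | e :: rest, ℓ, b =>
    let S := Finset.univ.filter (fun i : Fin (k + 1) => e > ℓ (b + i))
    if h : S.Nonempty then
      algDS k rest (Function.update ℓ (b + S.min' h) e) b
    else
      1 + algDS k rest (Function.update ℓ b e) (b + 1)


/-!
Amortised comparison with an arbitrary partition. Follow, element by element, the last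
elements `ℓ` of the greedy queues and `t` of the given partition (both start at the same
fictitious values), and use as potential `excess ℓ t`, the largest amount by which, at some
threshold `v`, more of the `t i` than of the `ℓ i` are `≤ v`. When `x` arrives, the greedy
replaces either the largest `ℓ i` below `x` (no down-step) or, if there is none, the largest
`ℓ i` (a down-step). In the first case the potential grows by at most the partition's
down-step `[x < t j]`; in the second it grows by at most `[x < t j] - 1`. Summing, the greedy's
down-steps are at most the partition's plus the initial potential, which is `0`.
-/

open Finset Function

section Excess

variable {ι : Type*} [Fintype ι]

def countLE (f : ι → ℤ) (v : ℤ) : ℕ := #{i | f i ≤ v}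

theorem countLE_le_countLE {f g : ι → ℤ} {v w : ℤ} (h : ∀ i, g i ≤ w → f i ≤ v) :
    countLE g w ≤ countLE f v :=
  card_le_card fun i => by simpa using h i

theorem countLE_lt_countLE {f : ι → ℤ} {v w : ℤ} {j : ι} (hv : v < f j) (hw : f j ≤ w) :
    countLE f v < countLE f w := by
  refine card_lt_card ((ssubset_iff_of_subset fun i => ?_).2 ⟨j, ?_⟩)
  · simpa using fun h => h.trans (hv.trans_le hw).le
  · simpa using ⟨hw, hv⟩

theorem countLE_eq_card {f : ι → ℤ} {v : ℤ} (h : ∀ i, f i ≤ v) :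
    countLE f v = Fintype.card ι := by
  simp [countLE, h]

theorem countLE_eq_zero {f : ι → ℤ} {v : ℤ} (h : ∀ i, v < f i) : countLE f v = 0 := by
  simp [countLE, h]

theorem countLE_le_card (f : ι → ℤ) (v : ℤ) : countLE f v ≤ Fintype.card ι :=
  card_filter_le _ _

theorem countLE_pos (f : ι → ℤ) (j : ι) : 0 < countLE f (f j) :=
  card_pos.2 ⟨j, by simp⟩

noncomputable def excess (ℓ t : ι → ℤ) : ℕ :=
  sInf {N | ∀ v, countLE t v ≤ countLE ℓ v + N}

theorem countLE_le_add_excess (ℓ t : ι → ℤ) (v : ℤ) :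
    countLE t v ≤ countLE ℓ v + excess ℓ t :=
  Nat.sInf_mem (s := {N | ∀ v, countLE t v ≤ countLE ℓ v + N})
    ⟨Fintype.card ι, fun v => (countLE_le_card t v).trans (Nat.le_add_left _ _)⟩ v

theorem excess_le {ℓ t : ι → ℤ} {N : ℕ} (h : ∀ v, countLE t v ≤ countLE ℓ v + N) :
    excess ℓ t ≤ N :=
  Nat.sInf_le h

theorem excess_self (ℓ : ι → ℤ) : excess ℓ ℓ = 0 :=
  Nat.le_zero.1 (excess_le fun _ => le_rfl)

variable [DecidableEq ι]

theorem countLE_update (f : ι → ℤ) (i : ι) (x v : ℤ) :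
    countLE (update f i x) v + (if f i ≤ v then 1 else 0)
      = countLE f v + (if x ≤ v then 1 else 0) := by
  have hrest : ∑ u ∈ {i}ᶜ, (if update f i x u ≤ v then 1 else 0)
      = ∑ u ∈ {i}ᶜ, (if f u ≤ v then 1 else 0) :=
    sum_congr rfl fun u hu => by rw [update_of_ne (by simpa using hu)]
  simp only [countLE, card_filter, Fintype.sum_eq_add_sum_compl i, hrest, update_self]
  omega

variable {ℓ t : ι → ℤ} {i j : ι} {x : ℤ}

theorem excess_update_update_le (hmax : ∀ u, ℓ u < x → ℓ u ≤ ℓ i)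
    (hxt : t j ≠ x) :
    excess (update ℓ i x) (update t j x) ≤ excess ℓ t + if x < t j then 1 else 0 := by
  refine excess_le fun v => ?_
  have hℓv := countLE_update ℓ i x v
  have htv := countLE_update t j x v
  have hv := countLE_le_add_excess ℓ t v
  rcases lt_or_gt_of_ne hxt with hq | hq
  · by_cases hcrit : ℓ i ≤ v ∧ v < t j
    · -- no entry of `ℓ` lies in `(v, t j]`, so the threshold `t j` is worse than `v`
      have hℓq : countLE ℓ (t j) ≤ countLE ℓ v := countLE_le_countLE fun u hu =>
        (hmax u (hu.trans_lt hq)).trans hcrit.1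
      have htq := countLE_lt_countLE hcrit.2 le_rfl
      have hq' := countLE_le_add_excess ℓ t (t j)
      split_ifs at hℓv htv ⊢ <;> omega
    · split_ifs at hℓv htv ⊢ <;> omega
  · split_ifs at hℓv htv ⊢ <;> omega

theorem excess_update_update_add_one_le (hbelow : ∀ u, x < ℓ u) (hmax : ∀ u, ℓ u ≤ ℓ i)
    (hxt : t j ≠ x) :
    excess (update ℓ i x) (update t j x) + 1 ≤ excess ℓ t + if x < t j then 1 else 0 := by
  have hcard := countLE_le_card t
  have hxi := hbelow i
  rcases lt_or_gt_of_ne hxt with hq | hq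
  · have hℓq : countLE ℓ (t j) = 0 := countLE_eq_zero fun u => hq.trans (hbelow u)
    have htq := countLE_le_add_excess ℓ t (t j)
    have htq_pos := countLE_pos t j
    suffices excess (update ℓ i x) (update t j x) ≤ excess ℓ t - 1 by
      rw [if_neg (not_lt.2 hq.le)]; omega
    refine excess_le fun v => ?_
    have hℓv := countLE_update ℓ i x v
    have htv := countLE_update t j x v
    have hv := countLE_le_add_excess ℓ t v
    rcases le_or_gt (ℓ i) v with hpv | hvp
    · have hℓv_card := countLE_eq_card fun u => (hmax u).trans hpv
      have htv_card := hcard v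
      split_ifs at hℓv htv ⊢ <;> omega
    rcases le_or_gt (t j) v with hqv | hvq
    · split_ifs at hℓv htv ⊢ <;> omega
    · have hℓv_zero := countLE_eq_zero fun u => (hvq.trans hq).trans (hbelow u)
      have htvq := countLE_lt_countLE hvq le_rfl
      split_ifs at hℓv htv ⊢ <;> omega
  · rw [if_pos hq, add_le_add_iff_right]
    refine excess_le fun v => ?_
    have hℓv := countLE_update ℓ i x v
    have htv := countLE_update t j x v
    have hv := countLE_le_add_excess ℓ t v
    by_cases hcrit : ℓ i ≤ v ∧ v < t j
    · have hℓv_card := countLE_eq_card fun u => (hmax u).trans hcrit.1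
      have htvq := countLE_lt_countLE hcrit.2 le_rfl
      have htq_card := hcard (t j)
      split_ifs at hℓv htv ⊢ <;> omega
    · split_ifs at hℓv htv ⊢ <;> omega

end Excess

theorem StrictAnti.update_of_lt {α β : Type*} [Preorder α] [DecidableEq α] [Preorder β]
    {g : α → β} (hg : StrictAnti g) {j : α} {x : β} (hj : g j < x)
    (hlt : ∀ i < j, x < g i) : StrictAnti (update g j x) := by
  intro a c hac
  rcases eq_or_ne a j with rfl | ha
  · rw [update_self, update_of_ne hac.ne']
    exact (hg hac).trans hj
  rcases eq_or_ne c j with rfl | hc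
  · rw [update_self, update_of_ne ha]
    exact hlt a hac
  · rw [update_of_ne ha, update_of_ne hc]
    exact hg hac

section Greedy

variable {k : ℕ} {ℓ : Fin (k + 1) → ℤ} {b j : Fin (k + 1)} {x : ℤ}

theorem le_of_isLeast_lt (hℓ : StrictAnti fun i => ℓ (b + i))
    (hj : IsLeast {i | ℓ (b + i) < x} j) (u : Fin (k + 1)) (hu : ℓ u < x) :
    ℓ u ≤ ℓ (b + j) := by
  have hmem : u - b ∈ {i | ℓ (b + i) < x} := by simpa using hu
  simpa using hℓ.antitone (hj.2 hmem)

theorem strictAnti_update_of_isLeast (hℓ : StrictAnti fun i => ℓ (b + i))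
    (hj : IsLeast {i | ℓ (b + i) < x} j) (hx : ∀ u, ℓ u ≠ x) :
    StrictAnti fun i => update ℓ (b + j) x (b + i) := by
  have hcomp : (fun i => update ℓ (b + j) x (b + i)) = update (fun i => ℓ (b + i)) j x :=
    update_comp_eq_of_injective ℓ (add_right_injective b) j x
  rw [hcomp]
  refine hℓ.update_of_lt hj.1 fun i hi => lt_of_le_of_ne ?_ (hx _).symm
  exact not_lt.1 fun h => (hj.2 h).not_gt hi

theorem le_base (hℓ : StrictAnti fun i => ℓ (b + i)) (u : Fin (k + 1)) : ℓ u ≤ ℓ b := by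
  simpa using hℓ.antitone (Fin.zero_le (u - b))

theorem strictAnti_update_base (hℓ : StrictAnti fun i => ℓ (b + i)) (hx : ∀ u, x < ℓ u) :
    StrictAnti fun i => update ℓ b x (b + 1 + i) := by
  have hshift : ∀ m < Fin.last k, update ℓ b x (b + 1 + m) = ℓ (b + (m + 1)) := by
    intro m hm
    rw [add_assoc, add_comm 1, update_of_ne]
    rw [Ne, add_eq_left, Fin.ext_iff, Fin.val_add_one_of_lt hm, Fin.val_zero]
    exact Nat.succ_ne_zero _
  intro i c hic
  have hi : i < Fin.last k := Fin.lt_last_iff_ne_last.2 (Fin.ne_last_of_lt hic)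
  simp only [hshift i hi]
  rcases (Fin.le_last c).eq_or_lt with rfl | hc
  · rw [add_assoc, add_comm 1, Fin.last_add_one, add_zero, update_self]
    exact hx _
  · rw [hshift c hc]
    refine hℓ ?_
    rw [Fin.lt_def, Fin.val_add_one_of_lt hi, Fin.val_add_one_of_lt hc]
    exact Nat.succ_lt_succ hic

end Greedy

theorem downSteps_cons_cons (u v : ℤ) (l : List ℤ) :
    downSteps (u :: v :: l) = (if v < u then 1 else 0) + downSteps (v :: l) := by
  simp only [downSteps, List.tail_cons, List.zip_cons_cons, List.countP_cons]
  split_ifs <;> simp_all [add_comm]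

theorem downSteps_cons_of_forall_le {a : ℤ} {l : List ℤ} (h : ∀ y ∈ l, a ≤ y) :
    downSteps (a :: l) = downSteps l := by
  cases l with
  | nil => rfl
  | cons y l => rw [downSteps_cons_cons, if_neg (not_lt.2 (h y List.mem_cons_self)), zero_add]

theorem sum_downSteps_cons_update {ι : Type*} [Fintype ι] [DecidableEq ι] (t : ι → ℤ)
    (qs : ι → List ℤ) (j : ι) (x : ℤ) :
    ∑ i, downSteps (t i :: update qs j (x :: qs j) i)
      = (if x < t j then 1 else 0) + ∑ i, downSteps (update t j x i :: qs i) := by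
  have hrest : ∑ i ∈ {j}ᶜ, downSteps (t i :: update qs j (x :: qs j) i)
      = ∑ i ∈ {j}ᶜ, downSteps (update t j x i :: qs i) :=
    sum_congr rfl fun i hi => by
      have hij : i ≠ j := by simpa using hi
      rw [update_of_ne hij, update_of_ne hij]
  rw [Fintype.sum_eq_add_sum_compl j, Fintype.sum_eq_add_sum_compl j, hrest, update_self,
    update_self, downSteps_cons_cons, add_assoc]

theorem KInterleave.mem {n : ℕ} {qs : Fin n → List ℤ} {C : List ℤ} (h : KInterleave qs C)
    {i : Fin n} {y : ℤ} (hy : y ∈ qs i) : y ∈ C := by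
  induction h with
  | nil => simp at hy
  | cons j x h ih =>
    rcases eq_or_ne i j with rfl | hij
    · rw [update_self, List.mem_cons] at hy
      exact List.mem_cons.2 (hy.imp_right ih)
    · exact List.mem_cons_of_mem x (ih (by rwa [update_of_ne hij] at hy))

theorem algDS_le_sum_downSteps_add_excess {k : ℕ} (C : List ℤ) {qs : Fin (k + 1) → List ℤ}
    (h : KInterleave qs C) (ℓ t : Fin (k + 1) → ℤ) (b : Fin (k + 1)) (hC : C.Nodup)
    (hℓC : ∀ y ∈ C, ∀ i, ℓ i ≠ y) (htC : ∀ y ∈ C, ∀ i, t i ≠ y)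
    (hℓ : StrictAnti fun i => ℓ (b + i)) :
    algDS k C ℓ b ≤ ∑ i, downSteps (t i :: qs i) + excess ℓ t := by
  induction C generalizing qs ℓ t b with
  | nil => simp [algDS]
  | cons x C ih =>
    cases h with
    | cons j _ h =>
    obtain ⟨hxC, hC⟩ := List.nodup_cons.1 hC
    have hfresh : ∀ f : Fin (k + 1) → ℤ, (∀ y ∈ x :: C, ∀ i, f i ≠ y) →
        ∀ p, ∀ y ∈ C, ∀ i, update f p x i ≠ y :=
      fun f hf p y hy => (forall_update_iff f (p := fun _ z => z ≠ y)).2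
        ⟨fun h => hxC (h ▸ hy), fun i _ => hf y (List.mem_cons_of_mem x hy) i⟩
    have hxℓ : ∀ u, ℓ u ≠ x := hℓC x List.mem_cons_self
    have hxt : t j ≠ x := htC x List.mem_cons_self j
    rw [sum_downSteps_cons_update, algDS]
    set S : Finset (Fin (k + 1)) := {i | x > ℓ (b + i)}
    by_cases hS : S.Nonempty
    · rw [dif_pos hS]
      have hleast : IsLeast {i | ℓ (b + i) < x} (S.min' hS) := by
        simpa [S] using isLeast_min' S hS
      have := ih h (update ℓ _ x) (update t j x) b hC (hfresh ℓ hℓC _) (hfresh t htC j)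
        (strictAnti_update_of_isLeast hℓ hleast hxℓ)
      have := excess_update_update_le (t := t) (j := j) (le_of_isLeast_lt hℓ hleast) hxt
      omega
    · rw [dif_neg hS]
      have hbelow : ∀ u, x < ℓ u := fun u =>
        lt_of_le_of_ne (not_lt.1 fun hu => hS ⟨u - b, by simpa [S] using hu⟩) (hxℓ u).symm
      have := ih h (update ℓ b x) (update t j x) (b + 1) hC (hfresh ℓ hℓC _) (hfresh t htC j)
        (strictAnti_update_base hℓ hbelow)
      have := excess_update_update_add_one_le hbelow (le_base hℓ) hxt
      omega

/-- for any list of distinct non-negative integers, the total number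
of down-steps of any partition of it into `k+1` queues (subsequences) is at least
the number of down-steps incurred by `Alg_DS` (started with fictitious last
elements `-(i+1)` and base queue `0`). -/
theorem algDS_optimal (k : ℕ) (A : List ℤ) (hnd : A.Nodup)
    (hpos : ∀ x ∈ A, 0 ≤ x)
    (qs : Fin (k + 1) → List ℤ) (henq : KInterleave qs A) :
    algDS k A (fun i => -(i : ℤ) - 1) 0 ≤ ∑ i : Fin (k + 1), downSteps (qs i) := by
  set ℓ₀ : Fin (k + 1) → ℤ := fun i => -(i : ℤ) - 1
  have hneg : ∀ i, ℓ₀ i < 0 := fun i => by simp only [ℓ₀]; omega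
  have hfresh : ∀ y ∈ A, ∀ i, ℓ₀ i ≠ y := fun y hy i => ((hneg i).trans_le (hpos y hy)).ne
  have hℓ₀ : StrictAnti fun i => ℓ₀ (0 + i) := fun i j hij => by
    simp only [ℓ₀, zero_add]
    have hij' : (i : ℕ) < j := hij
    omega
  have hdrop : ∀ i, downSteps (ℓ₀ i :: qs i) = downSteps (qs i) := fun i =>
    downSteps_cons_of_forall_le fun y hy => (hneg i).le.trans (hpos y (henq.mem hy))
  simpa [excess_self, hdrop] using
    algDS_le_sum_downSteps_add_excess A henq ℓ₀ ℓ₀ 0 hnd hfresh hfresh hℓ₀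
end
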